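/- arXiv:2412.06066 — 5 statements merged into one kernel-verified Lean document; each statement's English description precedes it below -/
import Mathlib

section
/- Let x, y, z be purely imaginary unit quaternions lying on a common great circle of the unit 2-sphere of imaginary quaternions. Then there exists a unit quaternion w such that w x w̄ = i, w z w̄ = e^{γk} i with γ ∈ [0, π], and w y w̄ = e^{θk} i with θ ∈ [0, 2π); moreover γ equals the angle between x and z, and θ equals the angle of x and y relative to z. -/
/-!
Conjugation by a unit quaternion rotates the imaginary quaternions and preserves the dot
product, hence `ang` and `rang`. Take a unit normal `N` of the plane of the circle and rotate
`x` to `i` and `N` to `k`; the circle becomes `{e^{tk} i}`, and the images of `z` and `y` have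
coordinates `(x·z, (N x)·z)` and `(x·y, (N x)·y)`. Choosing the sign of `N` puts `z` on the
closed upper half-circle (and `y` too when `z = ±x`), so the angle `γ` of `z` lies in `[0, π]`
and is `arccos (x·z)`; the angle `θ` of `y` is taken in `[0, 2π)`, and `θ = ∠_z(x, y)` is a case
analysis on `arccos ∘ cos`.
-/

open Real

noncomputable section

/-- The purely imaginary unit quaternion `i`. -/
def qi : Quaternion ℝ := ⟨0, 1, 0, 0⟩

/-- `e^{γk} i = cos γ · i + sin γ · j`. -/
def ekx (γ : ℝ) : Quaternion ℝ := ⟨0, Real.cos γ, Real.sin γ, 0⟩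

/-- Euclidean dot product of quaternions viewed as vectors in `ℝ⁴`. -/
def qdot (x y : Quaternion ℝ) : ℝ :=
  x.re * y.re + x.imI * y.imI + x.imJ * y.imJ + x.imK * y.imK

/-- The angle between two unit quaternions. -/
def ang (x y : Quaternion ℝ) : ℝ := Real.arccos (qdot x y)

open Classical in
/-- The angle of `x` and `y` relative to `z`, for `x, y, z` on a common great circle. -/
def rang (x y z : Quaternion ℝ) : ℝ :=
  if ang x z + ang z y = ang x y ∨ ang x z - ang z y = ang x y then ang x y
  else 2 * π - ang x y

open Quaternion

def qk : Quaternion ℝ := ⟨0, 0, 0, 1⟩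

@[simp] lemma qi_re : qi.re = 0 := rfl
@[simp] lemma qi_imI : qi.imI = 1 := rfl
@[simp] lemma qi_imJ : qi.imJ = 0 := rfl
@[simp] lemma qi_imK : qi.imK = 0 := rfl
@[simp] lemma qk_re : qk.re = 0 := rfl
@[simp] lemma qk_imI : qk.imI = 0 := rfl
@[simp] lemma qk_imJ : qk.imJ = 0 := rfl
@[simp] lemma qk_imK : qk.imK = 1 := rfl
@[simp] lemma ekx_re (t : ℝ) : (ekx t).re = 0 := rfl
@[simp] lemma ekx_imI (t : ℝ) : (ekx t).imI = cos t := rfl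
@[simp] lemma ekx_imJ (t : ℝ) : (ekx t).imJ = sin t := rfl
@[simp] lemma ekx_imK (t : ℝ) : (ekx t).imK = 0 := rfl

lemma ekx_zero : ekx 0 = qi := by ext <;> simp

lemma normSq_qi : normSq qi = 1 := by simp [normSq_def']

lemma normSq_qk : normSq qk = 1 := by simp [normSq_def']

lemma qi_mul_qk : qi * qk = -(qk * qi) := by ext <;> simp

lemma normSq_eq_one_iff {q : Quaternion ℝ} : normSq q = 1 ↔ ‖q‖ = 1 := by
  rw [normSq_eq_norm_mul_self, mul_self_eq_one_iff, or_iff_left]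
  linarith [norm_nonneg q]

lemma inv_eq_star_of_normSq_eq_one {q : Quaternion ℝ} (h : normSq q = 1) : q⁻¹ = star q := by
  rw [inv_def, h, inv_one, one_smul]

lemma qdot_comm (a b : Quaternion ℝ) : qdot a b = qdot b a := by
  simp only [qdot]; ring

lemma qdot_smul_left (c : ℝ) (a b : Quaternion ℝ) : qdot (c • a) b = c * qdot a b := by
  simp only [qdot, re_smul, imI_smul, imJ_smul, imK_smul, smul_eq_mul]; ring

lemma qdot_neg_left (a b : Quaternion ℝ) : qdot (-a) b = -qdot a b := by
  simp only [qdot, re_neg, imI_neg, imJ_neg, imK_neg]; ring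

lemma qdot_qi_left (a : Quaternion ℝ) : qdot qi a = a.imI := by simp [qdot]

lemma qdot_qk_left (a : Quaternion ℝ) : qdot qk a = a.imK := by simp [qdot]

lemma qdot_qk_mul_qi_left (a : Quaternion ℝ) : qdot (qk * qi) a = a.imJ := by simp [qdot]

lemma qdot_ekx (s t : ℝ) : qdot (ekx s) (ekx t) = cos (s - t) := by
  simp only [qdot, ekx_re, ekx_imI, ekx_imJ, ekx_imK, cos_sub]; ring

lemma ang_ekx (s t : ℝ) : ang (ekx s) (ekx t) = arccos (cos (s - t)) := by
  rw [ang, qdot_ekx]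

lemma mul_add_mul_eq_of_re_eq_zero {a b : Quaternion ℝ} (ha : a.re = 0) (hb : b.re = 0) :
    a * b + b * a = ((-2 * qdot a b : ℝ) : Quaternion ℝ) := by
  ext <;> simp [qdot, ha, hb] <;> ring

lemma mul_self_eq_neg_one {a : Quaternion ℝ} (ha : a.re = 0) (h : normSq a = 1) :
    a * a = -1 := by
  have hsq := normSq_def' a
  rw [h, ha] at hsq
  ext <;> simp [ha] <;> nlinarith

section Conjugation

variable {u : Quaternion ℝ}

lemma re_conj (hu : normSq u = 1) (a : Quaternion ℝ) : (u * a * star u).re = a.re := by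
  have key : (u * a * star u).re = normSq u * a.re := by
    simp only [re_mul, imI_mul, imJ_mul, imK_mul, re_star, imI_star, imJ_star, imK_star,
      normSq_def']
    ring
  rw [key, hu, one_mul]

lemma normSq_conj (hu : normSq u = 1) (a : Quaternion ℝ) : normSq (u * a * star u) = normSq a := by
  rw [map_mul, map_mul, normSq_star, hu, one_mul, mul_one]

lemma qdot_conj (hu : normSq u = 1) (a b : Quaternion ℝ) :
    qdot (u * a * star u) (u * b * star u) = qdot a b := by
  have key : qdot (u * a * star u) (u * b * star u) = normSq u ^ 2 * qdot a b := by
    simp only [qdot, re_mul, imI_mul, imJ_mul, imK_mul, re_star, imI_star, imJ_star, imK_star,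
      normSq_def']
    ring
  rw [key, hu, one_pow, one_mul]

lemma ang_conj (hu : normSq u = 1) (a b : Quaternion ℝ) :
    ang (u * a * star u) (u * b * star u) = ang a b := by
  rw [ang, ang, qdot_conj hu]

lemma rang_conj (hu : normSq u = 1) (a b c : Quaternion ℝ) :
    rang (u * a * star u) (u * b * star u) (u * c * star u) = rang a b c := by
  simp only [rang, ang_conj hu]

lemma conj_eq_of_mul_eq (hu : normSq u = 1) {a b : Quaternion ℝ} (h : u * a = b * u) :
    u * a * star u = b := by
  rw [h, mul_assoc, self_mul_star, hu, coe_one, mul_one]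

lemma conj_mul_self (hu : normSq u = 1) (a : Quaternion ℝ) : u * a * star u * u = u * a := by
  rw [mul_assoc, star_mul_self, hu, coe_one, mul_one]

lemma conj_mul_conj (hu : normSq u = 1) (a b : Quaternion ℝ) :
    u * a * star u * (u * b * star u) = u * (a * b) * star u := by
  simp only [← mul_assoc]
  rw [conj_mul_self hu]

end Conjugation

/-- The witness is the normalized rotor `1 - b a`. -/
lemma exists_unit_mul_eq_mul {a b : Quaternion ℝ} (ha : a * a = -1) (hb : b * b = -1)
    (hab : a ≠ -b) :
    ∃ u : Quaternion ℝ, normSq u = 1 ∧ u * a = b * u ∧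
      ∀ c, c * a = -(a * c) → c * b = -(b * c) → u * c = c * u := by
  set q := 1 - b * a
  have hqa : q * a = a + b := by
    rw [sub_mul, one_mul, mul_assoc, ha, mul_neg_one, sub_neg_eq_add]
  have hbq : b * q = b + a := by
    rw [mul_sub, mul_one, ← mul_assoc, hb, neg_one_mul, sub_neg_eq_add]
  have hq : q ≠ 0 := by
    intro h0
    rw [h0, mul_zero, add_comm] at hbq
    exact hab (eq_neg_iff_add_eq_zero.2 hbq.symm)
  refine ⟨(‖q‖⁻¹ : ℝ) • q, normSq_eq_one_iff.2 (norm_smul_inv_norm hq), ?_, ?_⟩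
  · rw [smul_mul_assoc, hqa, mul_smul_comm, hbq, add_comm]
  · intro c hca hcb
    have hqc : q * c = c * q := by
      have hcba : c * (b * a) = b * (a * c) := by
        rw [← mul_assoc, hcb, neg_mul, mul_assoc, hca, mul_neg, neg_neg]
      rw [sub_mul, mul_sub, one_mul, mul_one, mul_assoc, hcba]
    rw [smul_mul_assoc, hqc, mul_smul_comm]

lemma exists_frame {x N : Quaternion ℝ} (hxre : x.re = 0) (hNre : N.re = 0)
    (hx : normSq x = 1) (hN : normSq N = 1) (hxN : qdot x N = 0) :
    ∃ u : Quaternion ℝ, normSq u = 1 ∧ u * x = qi * u ∧ u * N = qk * u := by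
  obtain ⟨u₁, hu₁, hu₁x⟩ : ∃ u₁ : Quaternion ℝ, normSq u₁ = 1 ∧ u₁ * x = qi * u₁ := by
    by_cases hx' : x = -qi
    · exact ⟨qk, normSq_qk, by rw [hx', mul_neg, qi_mul_qk]⟩
    · obtain ⟨u, hu, h, -⟩ := exists_unit_mul_eq_mul (mul_self_eq_neg_one hxre hx)
        (mul_self_eq_neg_one qi_re normSq_qi) hx'
      exact ⟨u, hu, h⟩
  set m := u₁ * N * star u₁
  have hmre : m.re = 0 := by rw [re_conj hu₁, hNre]
  have hm : normSq m = 1 := by rw [normSq_conj hu₁, hN]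
  have hqim : qi * m = -(m * qi) := by
    have hmqi : qdot m qi = 0 := by
      rw [← conj_eq_of_mul_eq hu₁ hu₁x, qdot_conj hu₁, qdot_comm, hxN]
    have h := mul_add_mul_eq_of_re_eq_zero hmre qi_re
    rw [hmqi, mul_zero, coe_zero] at h
    exact eq_neg_of_add_eq_zero_right h
  obtain ⟨u₂, hu₂, hu₂m, hu₂qi⟩ :
      ∃ u₂ : Quaternion ℝ, normSq u₂ = 1 ∧ u₂ * m = qk * u₂ ∧ u₂ * qi = qi * u₂ := by
    by_cases hm' : m = -qk
    · exact ⟨qi, normSq_qi, by rw [hm', mul_neg, qi_mul_qk, neg_neg], rfl⟩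
    · obtain ⟨u, hu, h, hcomm⟩ := exists_unit_mul_eq_mul (mul_self_eq_neg_one hmre hm)
        (mul_self_eq_neg_one qk_re normSq_qk) hm'
      exact ⟨u, hu, h, hcomm qi hqim qi_mul_qk⟩
  refine ⟨u₂ * u₁, by rw [map_mul, hu₂, hu₁, one_mul], ?_, ?_⟩
  · rw [mul_assoc, hu₁x, ← mul_assoc, hu₂qi, mul_assoc]
  · rw [mul_assoc, ← conj_mul_self hu₁ N, ← mul_assoc, hu₂m, mul_assoc]

section Frame

variable {u x N : Quaternion ℝ}

lemma conj_eq_of_frame (hu : normSq u = 1) (hux : u * x = qi * u) (huN : u * N = qk * u)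
    {a : Quaternion ℝ} (hare : a.re = 0) :
    u * a * star u = (⟨0, qdot x a, qdot (N * x) a, qdot N a⟩ : Quaternion ℝ) := by
  have hxi := conj_eq_of_mul_eq hu hux
  have hNk := conj_eq_of_mul_eq hu huN
  ext
  · rw [re_conj hu, hare]
  · rw [← qdot_qi_left, ← hxi, qdot_conj hu]
  · rw [← qdot_qk_mul_qi_left, ← hxi, ← hNk, conj_mul_conj hu, qdot_conj hu]
  · rw [← qdot_qk_left, ← hNk, qdot_conj hu]

lemma sq_add_sq_of_frame (hu : normSq u = 1) (hux : u * x = qi * u) (huN : u * N = qk * u)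
    {a : Quaternion ℝ} (hare : a.re = 0) (ha : normSq a = 1) (hNa : qdot N a = 0) :
    qdot x a ^ 2 + qdot (N * x) a ^ 2 = 1 := by
  have h := normSq_conj hu a
  rw [normSq_def', conj_eq_of_frame hu hux huN hare, hNa, ha] at h
  simpa using h

end Frame

lemma exists_mem_Icc_cos_sin {c s : ℝ} (h : c ^ 2 + s ^ 2 = 1) (hs : 0 ≤ s) :
    ∃ γ ∈ Set.Icc 0 π, cos γ = c ∧ sin γ = s := by
  have hc : -1 ≤ c ∧ c ≤ 1 := by constructor <;> nlinarith
  refine ⟨arccos c, ⟨arccos_nonneg c, arccos_le_pi c⟩, cos_arccos hc.1 hc.2, ?_⟩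
  rw [sin_arccos, show 1 - c ^ 2 = s ^ 2 by linarith, sqrt_sq hs]

lemma exists_mem_Ico_cos_sin {c s : ℝ} (h : c ^ 2 + s ^ 2 = 1) :
    ∃ θ ∈ Set.Ico 0 (2 * π), cos θ = c ∧ sin θ = s := by
  rcases le_or_gt 0 s with hs | hs
  · obtain ⟨θ, hθ, hcθ, hsθ⟩ := exists_mem_Icc_cos_sin h hs
    exact ⟨θ, ⟨hθ.1, by linarith [hθ.2, pi_pos]⟩, hcθ, hsθ⟩
  · obtain ⟨γ, hγ, hc, hs'⟩ :=
      exists_mem_Icc_cos_sin (c := c) (s := -s) (by linarith) (by linarith)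
    have hγ0 : γ ≠ 0 := by rintro rfl; rw [sin_zero] at hs'; linarith
    refine ⟨2 * π - γ, ⟨by linarith [hγ.2, pi_pos], ?_⟩, by rw [cos_two_pi_sub, hc], ?_⟩
    · linarith [lt_of_le_of_ne hγ.1 (Ne.symm hγ0)]
    · rw [sin_two_pi_sub, hs', neg_neg]

lemma arccos_cos_eq_abs {t : ℝ} (h : |t| ≤ π) : arccos (cos t) = |t| := by
  rw [← cos_abs, arccos_cos (abs_nonneg t) h]

lemma rang_ekx {γ θ : ℝ} (hγ : γ ∈ Set.Icc 0 π) (hθ : θ ∈ Set.Ico 0 (2 * π))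
    (horient : sin γ = 0 → 0 ≤ sin θ) : rang (ekx 0) (ekx θ) (ekx γ) = θ := by
  simp only [rang, ang_ekx, zero_sub, cos_neg, arccos_cos hγ.1 hγ.2]
  obtain ⟨hγ0, hγπ⟩ := hγ
  obtain ⟨hθ0, hθ2π⟩ := hθ
  rcases le_or_gt θ π with hθπ | hπθ
  · have hB : arccos (cos (γ - θ)) = |γ - θ| :=
      arccos_cos_eq_abs (abs_le.2 ⟨by linarith, by linarith⟩)
    rw [arccos_cos hθ0 hθπ, hB, if_pos]
    rcases abs_cases (γ - θ) with ⟨h, _⟩ | ⟨h, _⟩ <;> rw [h]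
    · exact Or.inr (by ring)
    · exact Or.inl (by ring)
  · have hsinθ : sin θ < 0 := by
      rw [← neg_neg (sin θ), ← sin_sub_pi]
      exact neg_neg_of_pos (sin_pos_of_pos_of_lt_pi (by linarith) (by linarith))
    have hγ0' : γ ≠ 0 := fun h => by linarith [horient (by rw [h, sin_zero])]
    have hγπ' : γ ≠ π := fun h => by linarith [horient (by rw [h, sin_pi])]
    have hA : arccos (cos θ) = 2 * π - θ := by
      rw [← cos_two_pi_sub, arccos_cos (by linarith) (by linarith)]
    have hB : arccos (cos (γ - θ)) = θ - γ ∨ arccos (cos (γ - θ)) = 2 * π - (θ - γ) := by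
      rcases le_or_gt (θ - γ) π with h | h
      · left
        rw [arccos_cos_eq_abs (abs_le.2 ⟨by linarith, by linarith⟩), abs_of_neg (by linarith)]
        ring
      · right
        rw [← cos_add_two_pi, arccos_cos_eq_abs (abs_le.2 ⟨by linarith, by linarith⟩),
          abs_of_pos (by linarith)]
        ring
    rw [hA, if_neg]
    · ring
    · have := lt_of_le_of_ne hγ0 (Ne.symm hγ0')
      have := lt_of_le_of_ne hγπ hγπ'
      rcases hB with hB | hB <;> rw [hB] <;> rintro (h | h) <;> linarith

/-- `N * x` is what the frame of `exists_frame` sends to `j = k i`, so the sign of `N` fixes the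
orientation of the circle: `z`, and `y` as well when `z = ±x`, lie on the closed upper half. -/
lemma exists_oriented_unit_normal {n x y z : Quaternion ℝ} (hn : n ≠ 0) (hnre : n.re = 0)
    (hnx : qdot n x = 0) (hny : qdot n y = 0) (hnz : qdot n z = 0) :
    ∃ N : Quaternion ℝ, N.re = 0 ∧ normSq N = 1 ∧
      qdot N x = 0 ∧ qdot N y = 0 ∧ qdot N z = 0 ∧
      0 ≤ qdot (N * x) z ∧ (qdot (N * x) z = 0 → 0 ≤ qdot (N * x) y) := by
  set N₀ := (‖n‖⁻¹ : ℝ) • n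
  have hN₀re : N₀.re = 0 := by rw [re_smul, hnre, smul_zero]
  have hN₀ : normSq N₀ = 1 := normSq_eq_one_iff.2 (norm_smul_inv_norm hn)
  have hperp : ∀ a, qdot n a = 0 → qdot N₀ a = 0 := fun a h => by
    rw [qdot_smul_left, h, mul_zero]
  by_cases h : 0 ≤ qdot (N₀ * x) z ∧ (qdot (N₀ * x) z = 0 → 0 ≤ qdot (N₀ * x) y)
  · exact ⟨N₀, hN₀re, hN₀, hperp x hnx, hperp y hny, hperp z hnz, h⟩
  · refine ⟨-N₀, by rw [re_neg, hN₀re, neg_zero], by rw [normSq_neg, hN₀], ?_⟩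
    simp only [qdot_neg_left, neg_mul, hperp x hnx, hperp y hny, hperp z hnz, neg_zero,
      true_and]
    rcases lt_or_ge (qdot (N₀ * x) z) 0 with hlt | hge
    · exact ⟨by linarith, fun _ => by linarith⟩
    · obtain ⟨hz0, hy0⟩ : qdot (N₀ * x) z = 0 ∧ qdot (N₀ * x) y < 0 := by
        by_contra hc
        exact h ⟨hge, fun hz0 => le_of_not_gt fun hy0 => hc ⟨hz0, hy0⟩⟩
      exact ⟨by linarith, fun _ => by linarith⟩

/-- If `x, y, z` are purely imaginary unit quaternions lying on a common great circle,
then there is a unit quaternion `w` conjugating `x` to `i`, `z` to `e^{γk}i` with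
`γ ∈ [0,π]`, and `y` to `e^{θk}i` with `θ ∈ [0,2π)`; moreover `γ = ∠(x,z)` and
`θ = ∠_z(x,y)`. -/
theorem stmt4 (x y z : Quaternion ℝ)
    (hxre : x.re = 0) (hyre : y.re = 0) (hzre : z.re = 0)
    (hx : ‖x‖ = 1) (hy : ‖y‖ = 1) (hz : ‖z‖ = 1)
    (hplane : ∃ n : Quaternion ℝ, n ≠ 0 ∧ n.re = 0 ∧
      qdot n x = 0 ∧ qdot n y = 0 ∧ qdot n z = 0) :
    ∃ w : Quaternion ℝ, ‖w‖ = 1 ∧ ∃ γ θ : ℝ,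
      γ ∈ Set.Icc 0 π ∧ θ ∈ Set.Ico 0 (2 * π) ∧
      w * x * w⁻¹ = qi ∧ w * z * w⁻¹ = ekx γ ∧ w * y * w⁻¹ = ekx θ ∧
      γ = ang x z ∧ θ = rang x y z := by
  obtain ⟨n, hn, hnre, hnx, hny, hnz⟩ := hplane
  obtain ⟨N, hNre, hN, hNx, hNy, hNz, hz₀, hy₀⟩ :=
    exists_oriented_unit_normal hn hnre hnx hny hnz
  rw [← normSq_eq_one_iff] at hx hy hz
  obtain ⟨u, hu, hux, huN⟩ := exists_frame hxre hNre hx hN (by rw [qdot_comm, hNx])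
  obtain ⟨γ, hγ, hcγ, hsγ⟩ :=
    exists_mem_Icc_cos_sin (sq_add_sq_of_frame hu hux huN hzre hz hNz) hz₀
  obtain ⟨θ, hθ, hcθ, hsθ⟩ := exists_mem_Ico_cos_sin (sq_add_sq_of_frame hu hux huN hyre hy hNy)
  have hx' : u * x * star u = ekx 0 := by rw [ekx_zero]; exact conj_eq_of_mul_eq hu hux
  have hz' : u * z * star u = ekx γ := by
    rw [conj_eq_of_frame hu hux huN hzre, hNz, ekx, hcγ, hsγ]
  have hy' : u * y * star u = ekx θ := by
    rw [conj_eq_of_frame hu hux huN hyre, hNy, ekx, hcθ, hsθ]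
  refine ⟨u, normSq_eq_one_iff.1 hu, γ, θ, hγ, hθ, ?_⟩
  rw [inv_eq_star_of_normSq_eq_one hu, hx', hy', hz']
  refine ⟨ekx_zero, rfl, rfl, ?_, ?_⟩
  · rw [← ang_conj hu, hx', hz', ang_ekx, zero_sub, cos_neg, arccos_cos hγ.1 hγ.2]
  · rw [← rang_conj hu, hx', hy', hz', rang_ekx hγ hθ]
    rwa [hsθ, hsγ]
end
end

section
/- Let ρ be a group homomorphism from the group ⟨a, b, c, d | a c⁻¹ = b d⁻¹⟩ (the fundamental group of the 4-punctured sphere) into the unit quaternions such that ρ(a), ρ(b), ρ(c), ρ(d) are all purely imaginary. Then {ρ(a), ρ(b), ρ(c), ρ(d)} lie on a common great circle of the unit sphere of purely imaginary quaternions. -/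
/-!
For a unit purely imaginary quaternion `x` we have `x⁻¹ = -x`, so the relation reads `a c = b d`.
For purely imaginary `x, y` the imaginary part of `x y` is the cross product `x × y`, orthogonal to
both. Hence if `a × c = b × d` is nonzero it is a common normal to all four points. Otherwise
`c = ±a` and `d = ±b`, and a purely imaginary normal to `a` and `b` suffices; it exists because
`1, a, b` span at most three dimensions of `ℍ ≅ ℝ⁴`.
-/

noncomputable section

open Module Quaternion

theorem exists_ne_zero_forall_inner_eq_zero {𝕜 E ι : Type*} [RCLike 𝕜] [NormedAddCommGroup E]
    [InnerProductSpace 𝕜 E] [FiniteDimensional 𝕜 E] [Fintype ι] (v : ι → E)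
    (h : Fintype.card ι < finrank 𝕜 E) : ∃ n ≠ 0, ∀ i, inner 𝕜 n (v i) = 0 := by
  have hK : Submodule.span 𝕜 (Set.range v) ≠ ⊤ := fun hK ↦ by
    have := finrank_range_le_card (R := 𝕜) v
    rw [Set.finrank, hK, finrank_top] at this
    omega
  obtain ⟨n, hnK, hn⟩ :=
    Submodule.exists_mem_ne_zero_of_ne_bot (mt Submodule.orthogonal_eq_bot_iff.mp hK)
  exact ⟨n, hn, fun i ↦ (Submodule.mem_orthogonal' _ n).mp hnK _ (Submodule.subset_span ⟨i, rfl⟩)⟩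

theorem qdot_eq_inner (x y : ℍ[ℝ]) : qdot x y = inner ℝ x y := by
  simp [qdot, inner_def]

namespace Quaternion

theorem exists_ne_zero_re_eq_zero_orthogonal (x y : ℍ[ℝ]) :
    ∃ n : ℍ[ℝ], n ≠ 0 ∧ n.re = 0 ∧ inner ℝ n x = 0 ∧ inner ℝ n y = 0 := by
  obtain ⟨n, hn, h⟩ := exists_ne_zero_forall_inner_eq_zero (𝕜 := ℝ) ![1, x, y]
    (by simp [finrank_eq_four])
  refine ⟨n, hn, ?_, h 1, h 2⟩
  simpa [inner_def] using h 0

variable {x y : ℍ[ℝ]}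

theorem inv_eq_neg_of_re_eq_zero_of_norm_eq_one (hx : x.re = 0) (h : ‖x‖ = 1) : x⁻¹ = -x := by
  rw [inv_def, star_eq_neg.mpr hx, normSq_eq_norm_mul_self, h]
  simp

theorem inner_im_mul_left (hx : x.re = 0) (hy : y.re = 0) : inner ℝ (x * y).im x = 0 := by
  rw [← qdot_eq_inner]
  simp only [qdot, re_im, imI_im, imJ_im, imK_im, imI_mul, imJ_mul, imK_mul, hx, hy]
  ring

theorem inner_im_mul_right (hx : x.re = 0) (hy : y.re = 0) : inner ℝ (x * y).im y = 0 := by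
  rw [← qdot_eq_inner]
  simp only [qdot, re_im, imI_im, imJ_im, imK_im, imI_mul, imJ_mul, imK_mul, hx, hy]
  ring

theorem eq_smul_of_im_mul_eq_zero (hx : x.re = 0) (h : ‖x‖ = 1) (hxy : (x * y).im = 0) :
    y = -(x * y).re • x := by
  have hx0 : x ≠ 0 := by rintro rfl; simp at h
  calc y = x⁻¹ * (x * y) := (inv_mul_cancel_left₀ hx0 y).symm
    _ = -x * (x * y).re := by
      rw [inv_eq_neg_of_re_eq_zero_of_norm_eq_one hx h, ← re_add_im (x * y), hxy, add_zero, re_coe]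
    _ = -(x * y).re • x := by rw [mul_coe_eq_smul, smul_neg, neg_smul]

end Quaternion

/-- If `ρ` is a homomorphism of `⟨a,b,c,d | a c⁻¹ = b d⁻¹⟩` into the unit quaternions
with all four generators sent to purely imaginary elements, then the four images lie on
a common great circle (they are coequatorial): determined by the images `a, b, c, d`
satisfying the pillowcase relation. -/
theorem stmt5 (a b c d : Quaternion ℝ)
    (hare : a.re = 0) (hbre : b.re = 0) (hcre : c.re = 0) (hdre : d.re = 0)
    (ha : ‖a‖ = 1) (hb : ‖b‖ = 1) (hc : ‖c‖ = 1) (hd : ‖d‖ = 1)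
    (hrel : a * c⁻¹ = b * d⁻¹) :
    ∃ n : Quaternion ℝ, n ≠ 0 ∧ n.re = 0 ∧
      qdot n a = 0 ∧ qdot n b = 0 ∧ qdot n c = 0 ∧ qdot n d = 0 := by
  simp only [qdot_eq_inner]
  have hac : a * c = b * d := by
    simpa [inv_eq_neg_of_re_eq_zero_of_norm_eq_one hcre hc,
      inv_eq_neg_of_re_eq_zero_of_norm_eq_one hdre hd] using hrel
  by_cases hn : (a * c).im = 0
  · have hca := eq_smul_of_im_mul_eq_zero hare ha hn
    have hdb := eq_smul_of_im_mul_eq_zero hbre hb (hac ▸ hn)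
    obtain ⟨n, hn0, hnre, hna, hnb⟩ := exists_ne_zero_re_eq_zero_orthogonal a b
    refine ⟨n, hn0, hnre, hna, hnb, ?_, ?_⟩
    · rw [hca, inner_smul_right, hna, mul_zero]
    · rw [hdb, inner_smul_right, hnb, mul_zero]
  · refine ⟨(a * c).im, hn, re_im _, inner_im_mul_left hare hcre, ?_,
      inner_im_mul_right hare hcre, ?_⟩
    · rw [hac]; exact inner_im_mul_left hbre hdre
    · rw [hac]; exact inner_im_mul_right hbre hdre
end
end

section
/- Every traceless SU(2) representation of the group ⟨a, b, c, d | a c⁻¹ = b d⁻¹⟩ is conjugate to one of the form a ↦ i, b ↦ e^{γk} i, c ↦ e^{θk} i, d ↦ e^{(γ+θ)k} i for some γ, θ ∈ ℝ; moreover the parameters (γ, θ) and (γ', θ') give conjugate representations if and only if (γ', θ') = (γ + 2mπ, θ + 2nπ) for integers m, n, or (γ', θ') = (-γ + 2mπ, -θ + 2nπ). -/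
open Real

noncomputable section

/-!
Conjugation by a unit quaternion rotates the pure quaternions. For pure units `x` with
`x * x = -1` the relation reads `d = -b a c`, and `d` is pure exactly when `a, b, c` are coplanar.
In any ring, `1 - q p` carries a square root `p` of `-1` to another one `q`. Use it to move `a`
to `i`, then to move a unit normal of the plane of `i, b, c` to `k`; the second rotation is
about the `i`-axis, and afterwards `b, c` lie on the circle `e^{γk} i`, while
`-(e^{γk} i) i (e^{θk} i) = e^{(γ+θ)k} i`. Conversely, a `w` commuting with `i` is `x + y i`;
if `x ≠ 0` it can only fix points of that circle, and if `x = 0` it reflects the circle.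
-/

open Quaternion

namespace TracelessSU2

def qj : ℍ := ⟨0, 0, 1, 0⟩

def qk : ℍ := ⟨0, 0, 0, 1⟩

@[simp] lemma qi_re : qi.re = 0 := rfl
@[simp] lemma qi_imI : qi.imI = 1 := rfl
@[simp] lemma qi_imJ : qi.imJ = 0 := rfl
@[simp] lemma qi_imK : qi.imK = 0 := rfl
@[simp] lemma qj_re : qj.re = 0 := rfl
@[simp] lemma qj_imI : qj.imI = 0 := rfl
@[simp] lemma qj_imJ : qj.imJ = 1 := rfl
@[simp] lemma qj_imK : qj.imK = 0 := rfl
@[simp] lemma qk_re : qk.re = 0 := rfl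
@[simp] lemma qk_imI : qk.imI = 0 := rfl
@[simp] lemma qk_imJ : qk.imJ = 0 := rfl
@[simp] lemma qk_imK : qk.imK = 1 := rfl
@[simp] lemma ekx_re (γ : ℝ) : (ekx γ).re = 0 := rfl
@[simp] lemma ekx_imI (γ : ℝ) : (ekx γ).imI = cos γ := rfl
@[simp] lemma ekx_imJ (γ : ℝ) : (ekx γ).imJ = sin γ := rfl
@[simp] lemma ekx_imK (γ : ℝ) : (ekx γ).imK = 0 := rfl

lemma normSq_eq_one_iff {a : ℍ} : normSq a = 1 ↔ ‖a‖ = 1 := by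
  rw [normSq_eq_norm_mul_self, ← sq, pow_eq_one_iff_of_nonneg (norm_nonneg a) two_ne_zero]

lemma qi_norm : ‖qi‖ = 1 := by
  rw [← normSq_eq_one_iff, normSq_def']; norm_num

lemma qj_norm : ‖qj‖ = 1 := by
  rw [← normSq_eq_one_iff, normSq_def']; norm_num

lemma qk_norm : ‖qk‖ = 1 := by
  rw [← normSq_eq_one_iff, normSq_def']; norm_num

lemma mul_self_eq_neg_one {a : ℍ} (ha : a.re = 0) (hn : ‖a‖ = 1) : a * a = -1 := by
  rw [← sq, sq_eq_neg_normSq.mpr ha, normSq_eq_one_iff.mpr hn, coe_one]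

lemma inv_eq_neg {a : ℍ} (ha : a.re = 0) (hn : ‖a‖ = 1) : a⁻¹ = -a :=
  inv_eq_of_mul_eq_one_right (by rw [mul_neg, mul_self_eq_neg_one ha hn, neg_neg])

lemma conj_eq_iff_semiconjBy {G₀ : Type*} [GroupWithZero G₀] {w : G₀} (hw : w ≠ 0) {x y : G₀} :
    w * x * w⁻¹ = y ↔ SemiconjBy w x y :=
  mul_inv_eq_iff_eq_mul₀ hw

lemma semiconjBy_conj {G₀ : Type*} [GroupWithZero G₀] {w : G₀} (hw : w ≠ 0) (x : G₀) : SemiconjBy w x (w * x * w⁻¹) :=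
  (conj_eq_iff_semiconjBy hw).mp rfl

lemma re_mul_mul_star (w x : ℍ) : (w * x * star w).re = normSq w * x.re := by
  simp only [re_mul, imI_mul, imJ_mul, imK_mul, re_star, imI_star, imJ_star, imK_star,
    normSq_def']
  ring

lemma re_eq_of_semiconjBy {w x y : ℍ} (hw : w ≠ 0) (h : SemiconjBy w x y) : y.re = x.re := by
  have hy : y * ((normSq w : ℝ) : ℍ) = w * x * star w := by rw [← self_mul_star, ← mul_assoc, h.eq]
  have := congrArg (fun q : ℍ => q.re) hy
  rw [re_mul_mul_star, mul_coe_eq_smul, re_smul, smul_eq_mul] at this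
  exact mul_right_cancel₀ (normSq_ne_zero.mpr hw) (by linarith)

lemma norm_eq_of_semiconjBy {R : Type*} [NormedDivisionRing R] {w x y : R} (hw : w ≠ 0) (h : SemiconjBy w x y) : ‖y‖ = ‖x‖ := by
  have := congrArg norm h.eq
  rw [norm_mul, norm_mul] at this
  exact mul_right_cancel₀ (norm_ne_zero_iff.mpr hw) (by linarith)

lemma ne_zero_of_norm_eq_one {E : Type*} [NormedAddCommGroup E] {w : E} (hw : ‖w‖ = 1) :
    w ≠ 0 :=
  ne_zero_of_norm_ne_zero (by rw [hw]; exact one_ne_zero)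

lemma semiconjBy_one_sub_mul {R : Type*} [Ring R] {p q : R} (hp : p * p = -1)
    (hq : q * q = -1) : SemiconjBy (1 - q * p) p q := by
  unfold SemiconjBy
  rw [sub_mul, mul_sub, mul_assoc, hp, ← mul_assoc, hq]
  noncomm_ring

lemma one_sub_mul_ne_zero {R : Type*} [Ring R] {p q : R} (hq : q * q = -1) (h : p ≠ -q) :
    1 - q * p ≠ 0 := by
  intro h0
  apply h
  have : q * (q * p) = q := by rw [← sub_eq_zero.mp h0, mul_one]
  rwa [← mul_assoc, hq, neg_one_mul, neg_eq_iff_eq_neg] at this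

lemma exists_cos_sin_eq {p q : ℝ} (h : p ^ 2 + q ^ 2 = 1) : ∃ γ, cos γ = p ∧ sin γ = q := by
  have hz : ‖(⟨p, q⟩ : ℂ)‖ = 1 := by
    rw [Complex.norm_def, Complex.normSq_mk, ← sq, ← sq, h, Real.sqrt_one]
  have hz0 : (⟨p, q⟩ : ℂ) ≠ 0 := norm_ne_zero_iff.mp (by rw [hz]; exact one_ne_zero)
  exact ⟨Complex.arg ⟨p, q⟩, by simp [Complex.cos_arg hz0, hz], by simp [Complex.sin_arg, hz]⟩

lemma ekx_eq_ekx_iff {γ γ' : ℝ} : ekx γ = ekx γ' ↔ ∃ m : ℤ, γ' = γ + 2 * m * π := by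
  constructor
  · intro h
    have hc : cos γ' = cos γ := by rw [← ekx_imI, ← h, ekx_imI]
    have hs : sin γ' = sin γ := by rw [← ekx_imJ, ← h, ekx_imJ]
    obtain ⟨m, hm⟩ := Real.Angle.angle_eq_iff_two_pi_dvd_sub.mp (Real.Angle.cos_sin_inj hc hs)
    exact ⟨m, by linarith⟩
  · rintro ⟨m, rfl⟩
    rw [show γ + 2 * m * π = γ + m * (2 * π) by ring, ekx, ekx, cos_add_int_mul_two_pi,
      sin_add_int_mul_two_pi]

lemma eq_ekx_of_imK_eq_zero {v : ℍ} (hv : v.re = 0) (hk : v.imK = 0) (hn : ‖v‖ = 1) :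
    ∃ γ, v = ekx γ := by
  have h := normSq_eq_one_iff.mpr hn
  rw [normSq_def', hv, hk] at h
  obtain ⟨γ, hc, hs⟩ := exists_cos_sin_eq (p := v.imI) (q := v.imJ) (by linarith)
  exact ⟨γ, by ext <;> simp [hv, hk, hc, hs]⟩

lemma exists_semiconjBy_qi {a : ℍ} (ha : a.re = 0) (han : ‖a‖ = 1) :
    ∃ w : ℍ, ‖w‖ = 1 ∧ SemiconjBy w a qi := by
  have hqi := mul_self_eq_neg_one qi_re qi_norm
  rcases eq_or_ne a (-qi) with rfl | h
  · refine ⟨qj, qj_norm, ?_⟩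
    ext <;> simp [re_mul, imI_mul, imJ_mul, imK_mul]
  · exact ⟨_, norm_smul_inv_norm (𝕜 := ℝ) (one_sub_mul_ne_zero hqi h),
      (semiconjBy_one_sub_mul (mul_self_eq_neg_one ha han) hqi).smul_left _⟩

lemma smul_qk_sub_smul_qj_ne_zero {x y : ℝ} (h : ¬(x = 0 ∧ y = 0)) : x • qk - y • qj ≠ 0 := by
  contrapose! h
  simpa using And.intro (congrArg (·.imK) h) (congrArg (·.imJ) h)

lemma exists_normal {b c : ℍ} (hb : b.re = 0) (hc : c.re = 0) (hbc : (b * qi * c).re = 0) :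
    ∃ m : ℍ, m ≠ 0 ∧ m.re = 0 ∧ m.imI = 0 ∧ (b * m).re = 0 ∧ (c * m).re = 0 := by
  have hbc' : b.imJ * c.imK = b.imK * c.imJ := by
    simp only [re_mul, hb, qi_re, mul_zero, qi_imI, mul_one, zero_sub, qi_imJ, sub_zero, qi_imK, hc,
      imI_mul, add_zero, sub_self, zero_mul, imJ_mul, zero_add, imK_mul, neg_mul,
      sub_neg_eq_add] at hbc
    linarith
  -- the normal is `i × b = b.imJ • k - b.imK • j`, or `i × c` if that vanishes, or else `k`
  by_cases hb0 : b.imJ = 0 ∧ b.imK = 0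
  · by_cases hc0 : c.imJ = 0 ∧ c.imK = 0
    · exact ⟨qk, ne_zero_of_norm_eq_one qk_norm, rfl, rfl, by simp [re_mul, hb0],
        by simp [re_mul, hc0]⟩
    · exact ⟨_, smul_qk_sub_smul_qj_ne_zero hc0, by simp, by simp, by simp [re_mul, hb, hb0],
        by simp [re_mul]; ring⟩
  · exact ⟨_, smul_qk_sub_smul_qj_ne_zero hb0, by simp, by simp, by simp [re_mul]; ring,
      by simp [re_mul]; linarith⟩

lemma exists_unit_normal {b c : ℍ} (hb : b.re = 0) (hc : c.re = 0) (hbc : (b * qi * c).re = 0) :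
    ∃ n : ℍ, ‖n‖ = 1 ∧ n.re = 0 ∧ n.imI = 0 ∧ n ≠ -qk ∧ (b * n).re = 0 ∧ (c * n).re = 0 := by
  obtain ⟨m, hm0, hm, hmI, hbm, hcm⟩ := exists_normal hb hc hbc
  have of_smul (r : ℝ) (hr : ‖r • m‖ = 1) (hk : r • m ≠ -qk) :
      ∃ n : ℍ, ‖n‖ = 1 ∧ n.re = 0 ∧ n.imI = 0 ∧ n ≠ -qk ∧ (b * n).re = 0 ∧ (c * n).re = 0 :=
    ⟨r • m, hr, by simp [hm], by simp [hmI], hk, by simp [hbm], by simp [hcm]⟩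
  have hunit : ‖(‖m‖⁻¹ : ℝ) • m‖ = 1 := norm_smul_inv_norm hm0
  by_cases hk : (‖m‖⁻¹ : ℝ) • m = -qk
  · refine of_smul (-‖m‖⁻¹) (by rwa [neg_smul, norm_neg]) ?_
    rw [neg_smul, hk, neg_neg]
    intro h
    have := congrArg (·.imK) h
    norm_num at this
  · exact of_smul _ hunit hk

lemma commute_one_sub_qk_mul_qi {n : ℍ} (hn : n.re = 0) (hnI : n.imI = 0) :
    Commute (1 - qk * n) qi := by
  ext <;> simp [re_mul, imI_mul, imJ_mul, imK_mul, hn, hnI]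

lemma exists_semiconjBy_ekx {w n b : ℍ} (hw : w ≠ 0) (hn : SemiconjBy w n qk)
    (hb : b.re = 0) (hbn : ‖b‖ = 1) (hbn' : (b * n).re = 0) : ∃ γ, SemiconjBy w b (ekx γ) := by
  obtain ⟨b', hb'⟩ : ∃ b', SemiconjBy w b b' := ⟨_, semiconjBy_conj hw b⟩
  have hk : b'.imK = 0 := by
    have := re_eq_of_semiconjBy hw (hb'.mul_right hn)
    simpa [re_mul, hbn'] using this
  obtain ⟨γ, hγ⟩ := eq_ekx_of_imK_eq_zero (by rw [re_eq_of_semiconjBy hw hb', hb]) hk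
    (by rw [norm_eq_of_semiconjBy hw hb', hbn])
  exact ⟨γ, hγ ▸ hb'⟩

lemma exists_commute_qi_semiconjBy_ekx {b c : ℍ} (hb : b.re = 0) (hbn : ‖b‖ = 1) (hc : c.re = 0)
    (hcn : ‖c‖ = 1) (hbc : (b * qi * c).re = 0) :
    ∃ w : ℍ, ‖w‖ = 1 ∧ Commute w qi ∧ ∃ γ θ, SemiconjBy w b (ekx γ) ∧ SemiconjBy w c (ekx θ) := by
  obtain ⟨n, hnn, hn, hnI, hnk, hbn', hcn'⟩ := exists_unit_normal hb hc hbc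
  have hqk := mul_self_eq_neg_one qk_re qk_norm
  have hu := one_sub_mul_ne_zero hqk hnk
  have hw := norm_smul_inv_norm (𝕜 := ℝ) hu
  have hwn := (semiconjBy_one_sub_mul (mul_self_eq_neg_one hn hnn) hqk).smul_left
    (‖1 - qk * n‖⁻¹ : ℝ)
  obtain ⟨γ, hγ⟩ := exists_semiconjBy_ekx (ne_zero_of_norm_eq_one hw) hwn hb hbn hbn'
  obtain ⟨θ, hθ⟩ := exists_semiconjBy_ekx (ne_zero_of_norm_eq_one hw) hwn hc hcn hcn'
  exact ⟨_, hw, (commute_one_sub_qk_mul_qi hn hnI).smul_left _, γ, θ, hγ, hθ⟩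

lemma eq_neg_mul_mul_of_mul_inv_eq {a b c d : ℍ} (hb : b.re = 0) (hbn : ‖b‖ = 1) (hc : c.re = 0)
    (hcn : ‖c‖ = 1) (hd : d.re = 0) (hdn : ‖d‖ = 1) (h : a * c⁻¹ = b * d⁻¹) :
    d = -(b * a * c) := by
  rw [inv_eq_neg hc hcn, inv_eq_neg hd hdn, mul_neg, mul_neg, neg_inj] at h
  rw [mul_assoc, h, ← mul_assoc, mul_self_eq_neg_one hb hbn, neg_one_mul, neg_neg]

lemma neg_ekx_mul_qi_mul_ekx (γ θ : ℝ) : -(ekx γ * qi * ekx θ) = ekx (γ + θ) := by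
  ext <;> simp [re_mul, imI_mul, imJ_mul, imK_mul, cos_add, sin_add]; ring

theorem exists_semiconjBy_standard {a b c d : ℍ} (ha : a.re = 0) (han : ‖a‖ = 1)
    (hb : b.re = 0) (hbn : ‖b‖ = 1) (hc : c.re = 0) (hcn : ‖c‖ = 1) (hd : d.re = 0)
    (hdn : ‖d‖ = 1) (h : a * c⁻¹ = b * d⁻¹) :
    ∃ w : ℍ, ‖w‖ = 1 ∧ ∃ γ θ : ℝ, SemiconjBy w a qi ∧ SemiconjBy w b (ekx γ) ∧
      SemiconjBy w c (ekx θ) ∧ SemiconjBy w d (ekx (γ + θ)) := by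
  have hd' := eq_neg_mul_mul_of_mul_inv_eq hb hbn hc hcn hd hdn h
  obtain ⟨w₁, hw₁, ha₁⟩ := exists_semiconjBy_qi ha han
  have hw₁0 := ne_zero_of_norm_eq_one hw₁
  obtain ⟨b₁, hb₁⟩ : ∃ b₁, SemiconjBy w₁ b b₁ := ⟨_, semiconjBy_conj hw₁0 b⟩
  obtain ⟨c₁, hc₁⟩ : ∃ c₁, SemiconjBy w₁ c c₁ := ⟨_, semiconjBy_conj hw₁0 c⟩
  have hbac : (b₁ * qi * c₁).re = 0 := by
    rw [re_eq_of_semiconjBy hw₁0 ((hb₁.mul_right ha₁).mul_right hc₁), ← neg_neg (b * a * c),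
      ← hd', re_neg, hd, neg_zero]
  obtain ⟨w₂, hw₂, hqi, γ, θ, hγ, hθ⟩ := exists_commute_qi_semiconjBy_ekx
    (by rw [re_eq_of_semiconjBy hw₁0 hb₁, hb]) (by rw [norm_eq_of_semiconjBy hw₁0 hb₁, hbn])
    (by rw [re_eq_of_semiconjBy hw₁0 hc₁, hc]) (by rw [norm_eq_of_semiconjBy hw₁0 hc₁, hcn]) hbac
  have ha₂ := SemiconjBy.mul_left hqi ha₁
  have hb₂ := hγ.mul_left hb₁
  have hc₂ := hθ.mul_left hc₁
  refine ⟨w₂ * w₁, by rw [norm_mul, hw₂, hw₁, one_mul], γ, θ, ha₂, hb₂, hc₂, ?_⟩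
  rw [hd', ← neg_ekx_mul_qi_mul_ekx]
  exact ((hb₂.mul_right ha₂).mul_right hc₂).neg_right

lemma imJ_eq_zero_and_imK_eq_zero_of_commute_qi {w : ℍ} (h : Commute w qi) :
    w.imJ = 0 ∧ w.imK = 0 := by
  have := h.eq
  rw [Quaternion.ext_iff] at this
  simp only [re_mul, qi_re, mul_zero, qi_imI, mul_one, zero_sub, qi_imJ, sub_zero, qi_imK,
    zero_mul, one_mul, imI_mul, add_zero, zero_add, imJ_mul, sub_self, imK_mul, true_and] at this
  constructor <;> linarith

lemma semiconjBy_ekx_cases {w : ℍ} (hw : w ≠ 0) (hqi : Commute w qi) :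
    (∀ γ γ', SemiconjBy w (ekx γ) (ekx γ') → ekx γ = ekx γ') ∨
      ∀ γ γ', SemiconjBy w (ekx γ) (ekx γ') → ekx (-γ) = ekx γ' := by
  obtain ⟨hj, hk⟩ := imJ_eq_zero_and_imK_eq_zero_of_commute_qi hqi
  by_cases hre : w.re = 0
  · have hI : w.imI ≠ 0 := fun hI => hw (by ext <;> simp [hre, hI, hj, hk])
    refine .inr fun γ γ' h => ?_
    have := h.eq
    rw [Quaternion.ext_iff] at this
    simp only [re_mul, hre, ekx_re, mul_zero, ekx_imI, zero_sub, hj, ekx_imJ, zero_mul, sub_zero,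
      hk, ekx_imK, neg_inj, imI_mul, add_zero, sub_self, imJ_mul, imK_mul, zero_add, true_and]
      at this
    obtain ⟨hc, hs⟩ := this
    have hc' : cos γ = cos γ' := mul_left_cancel₀ hI (by linear_combination hc)
    have hs' : -sin γ = sin γ' := mul_left_cancel₀ hI (by linear_combination -hs)
    rw [ekx, ekx, cos_neg, sin_neg, hc', hs']
  · refine .inl fun γ γ' h => ?_
    have := h.eq
    rw [Quaternion.ext_iff] at this
    simp only [re_mul, ekx_re, mul_zero, ekx_imI, zero_sub, hj, ekx_imJ, zero_mul, sub_zero, hk,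
      ekx_imK, neg_inj, imI_mul, add_zero, zero_add, imJ_mul, sub_self, imK_mul] at this
    obtain ⟨-, hc, hs, -⟩ := this
    have hc' : cos γ = cos γ' := mul_left_cancel₀ hre (by linear_combination hc)
    have hs' : sin γ = sin γ' := mul_left_cancel₀ hre (by linear_combination hs)
    rw [ekx, ekx, hc', hs']

lemma qi_mul_ekx_mul_inv_qi (γ : ℝ) : qi * ekx γ * qi⁻¹ = ekx (-γ) := by
  rw [conj_eq_iff_semiconjBy (ne_zero_of_norm_eq_one qi_norm)]
  ext <;> simp [re_mul, imI_mul, imJ_mul, imK_mul]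

end TracelessSU2

open TracelessSU2 in
/-- Every traceless SU(2) representation of `⟨a,b,c,d | a c⁻¹ = b d⁻¹⟩` is conjugate to
the standard form `a ↦ i, b ↦ e^{γk}i, c ↦ e^{θk}i, d ↦ e^{(γ+θ)k}i`; and the standard
forms for `(γ,θ)` and `(γ',θ')` are conjugate iff `(γ',θ') = (γ+2mπ, θ+2nπ)` or
`(γ',θ') = (-γ+2mπ, -θ+2nπ)` for integers `m, n`. -/
theorem stmt6 :
    (∀ a b c d : Quaternion ℝ, a.re = 0 → b.re = 0 → c.re = 0 → d.re = 0 →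
      ‖a‖ = 1 → ‖b‖ = 1 → ‖c‖ = 1 → ‖d‖ = 1 → a * c⁻¹ = b * d⁻¹ →
      ∃ w : Quaternion ℝ, ‖w‖ = 1 ∧ ∃ γ θ : ℝ,
        w * a * w⁻¹ = qi ∧ w * b * w⁻¹ = ekx γ ∧ w * c * w⁻¹ = ekx θ ∧
        w * d * w⁻¹ = ekx (γ + θ)) ∧
    (∀ γ θ γ' θ' : ℝ,
      (∃ w : Quaternion ℝ, ‖w‖ = 1 ∧ w * qi * w⁻¹ = qi ∧
          w * ekx γ * w⁻¹ = ekx γ' ∧ w * ekx θ * w⁻¹ = ekx θ' ∧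
          w * ekx (γ + θ) * w⁻¹ = ekx (γ' + θ')) ↔
      (∃ m n : ℤ, (γ' = γ + 2 * m * π ∧ θ' = θ + 2 * n * π) ∨
        (γ' = -γ + 2 * m * π ∧ θ' = -θ + 2 * n * π))) := by
  refine ⟨fun a b c d ha hb hc hd han hbn hcn hdn h => ?_, fun γ θ γ' θ' => ⟨?_, ?_⟩⟩
  · obtain ⟨w, hw, γ, θ, h⟩ := exists_semiconjBy_standard ha han hb hbn hc hcn hd hdn h
    refine ⟨w, hw, γ, θ, ?_⟩
    simpa only [conj_eq_iff_semiconjBy (ne_zero_of_norm_eq_one hw)] using h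
  · rintro ⟨w, hw, hqi, hγ, hθ, -⟩
    have hw0 := ne_zero_of_norm_eq_one hw
    rw [conj_eq_iff_semiconjBy hw0] at hqi hγ hθ
    rcases semiconjBy_ekx_cases hw0 hqi with h | h
    · obtain ⟨m, hm⟩ := ekx_eq_ekx_iff.mp (h _ _ hγ)
      obtain ⟨n, hn⟩ := ekx_eq_ekx_iff.mp (h _ _ hθ)
      exact ⟨m, n, .inl ⟨hm, hn⟩⟩
    · obtain ⟨m, hm⟩ := ekx_eq_ekx_iff.mp (h _ _ hγ)
      obtain ⟨n, hn⟩ := ekx_eq_ekx_iff.mp (h _ _ hθ)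
      exact ⟨m, n, .inr ⟨hm, hn⟩⟩
  · rintro ⟨m, n, ⟨rfl, rfl⟩ | ⟨rfl, rfl⟩⟩
    · refine ⟨1, norm_one, ?_⟩
      simp only [one_mul, inv_one, mul_one, ekx_eq_ekx_iff]
      exact ⟨trivial, ⟨m, rfl⟩, ⟨n, rfl⟩, ⟨m + n, by push_cast; ring⟩⟩
    · refine ⟨qi, qi_norm, ?_⟩
      simp only [mul_inv_cancel_right₀ (ne_zero_of_norm_eq_one qi_norm), qi_mul_ekx_mul_inv_qi,
        ekx_eq_ekx_iff]
      exact ⟨trivial, ⟨m, rfl⟩, ⟨n, rfl⟩, ⟨m + n, by push_cast; ring⟩⟩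
end
end

section
/- Let x, y, z be distinct points on a circle (great circle of the sphere of imaginary unit quaternions) with z ∉ {x, -x} and angles a = ∠(x,z), b = ∠(z,y), c = ∠(x,y) ∈ [0, π]. Then the relative angle ∠_z(x, y), defined as c if a + b = c or a - b = c and as 2π - c otherwise, satisfies: if x = i, z = e^{γk}i with γ ∈ (0,π), and y = e^{θk}i with θ ∈ [0, 2π), then ∠_z(x, y) = θ. -/
open Real

noncomputable section

/-- For distinct points `x = i`, `z = e^{γk}i` (`γ ∈ (0,π)`, so `z ∉ {x,-x}`) and
`y = e^{θk}i` (`θ ∈ [0,2π)`) on the great circle `S¹_{k⊥}`, the relative angle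
`∠_z(x,y)` equals `θ`. -/
theorem stmt9 (γ θ : ℝ) (hγ : γ ∈ Set.Ioo 0 π) (hθ : θ ∈ Set.Ico 0 (2 * π))
    (hxy : qi ≠ ekx θ) (hxz : qi ≠ ekx γ) (hyz : ekx θ ≠ ekx γ) :
    rang qi (ekx θ) (ekx γ) = θ := by
  obtain ⟨hγ0, hγπ⟩ := hγ
  obtain ⟨hθ0, hθ2π⟩ := hθ
  have hπ : (0:ℝ) < π := Real.pi_pos
  have h1 : ang qi (ekx θ) = Real.arccos (Real.cos θ) := by
    simp [ang, qdot, qi, ekx]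
  have h2 : ang qi (ekx γ) = γ := by
    have : qdot qi (ekx γ) = Real.cos γ := by simp [qdot, qi, ekx]
    rw [ang, this, Real.arccos_cos hγ0.le hγπ.le]
  have h3 : ang (ekx γ) (ekx θ) = Real.arccos (Real.cos (γ - θ)) := by
    have : qdot (ekx γ) (ekx θ) = Real.cos (γ - θ) := by
      simp [qdot, ekx, Real.cos_sub]
    rw [ang, this]
  unfold rang
  rw [h1, h2, h3]
  rcases le_or_gt θ π with hle | hgt
  · -- θ ∈ [0, π]
    have hcθ : Real.arccos (Real.cos θ) = θ := Real.arccos_cos hθ0 hle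
    have habs : Real.arccos (Real.cos (γ - θ)) = |γ - θ| := by
      rw [← Real.cos_abs, Real.arccos_cos (abs_nonneg _)
        (abs_le.2 ⟨by linarith, by linarith⟩)]
    rw [hcθ, habs]
    rcases le_or_gt γ θ with h | h
    · rw [if_pos (Or.inl (by rw [abs_of_nonpos (by linarith)]; ring))]
    · rw [if_pos (Or.inr (by rw [abs_of_pos (by linarith)]; ring))]
  · -- θ ∈ (π, 2π)
    have hcθ : Real.arccos (Real.cos θ) = 2 * π - θ := by
      rw [← Real.cos_two_pi_sub, Real.arccos_cos (by linarith) (by linarith)]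
    rw [hcθ]
    have hsym : Real.cos (γ - θ) = Real.cos (θ - γ) := by
      rw [← Real.cos_neg]; ring_nf
    rcases le_or_gt (θ - γ) π with h | h
    · have hv : Real.arccos (Real.cos (γ - θ)) = θ - γ := by
        rw [hsym, Real.arccos_cos (by linarith) h]
      have hno : ¬(γ + (θ - γ) = 2 * π - θ ∨ γ - (θ - γ) = 2 * π - θ) := by
        push_neg
        constructor <;> intro hc <;> nlinarith
      rw [hv, if_neg hno]
      ring
    · have hv : Real.arccos (Real.cos (γ - θ)) = 2 * π - (θ - γ) := by
        rw [hsym, ← Real.cos_two_pi_sub, Real.arccos_cos (by linarith) (by linarith)]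
      have hno : ¬(γ + (2 * π - (θ - γ)) = 2 * π - θ ∨
          γ - (2 * π - (θ - γ)) = 2 * π - θ) := by
        push_neg
        constructor <;> intro hc <;> nlinarith
      rw [hv, if_neg hno]
      ring
end
end

section
/- The subset of the torus-times-sphere T² × S² (parameterized by (γ, θ) ∈ T² and (α, β) spherical coordinates on S²) cut out by the equation sin γ cos α = 0 is homeomorphic to the union of a 3-torus T³ and two copies of S¹ × S², glued along two disjoint 2-tori. -/
open Real

noncomputable section

/-!
Since `sin γ cos α = 0` iff `cos α = 0` or `sin γ = 0`, the locus is the union of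
`T² × E`, with `E` the equator of `S²`, and `{0, π} × S¹ × S²`, meeting in `{0, π} × S¹ × E`.
The equator is a circle, being the image of the unit circle of `ℂ` under `z ↦ (re z, im z, 0)`,
and `{0, π}` is a two-point Hausdorff space, hence a copy of `Bool`.
-/

/-- The unit 2-sphere in `ℝ³`. -/
abbrev S2 : Type := Metric.sphere (0 : EuclideanSpace ℝ (Fin 3)) 1

/-- The subset of `T² × S²` cut out by `sin γ · cos α = 0`, where `cos α` is the
`k`-component (third coordinate) of the sphere point. -/
def VSet : Set ((Real.Angle × Real.Angle) × S2) :=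
  {p | p.1.1.sin * ((p.2 : EuclideanSpace ℝ (Fin 3)) 2) = 0}

/-- The piece `cos α = 0` of `VSet` (a 3-torus). -/
def ASet : Set ((Real.Angle × Real.Angle) × S2) :=
  {p | ((p.2 : EuclideanSpace ℝ (Fin 3)) 2) = 0}

/-- The piece `sin γ = 0` of `VSet` (two copies of `S¹ × S²`). -/
def BSet : Set ((Real.Angle × Real.Angle) × S2) :=
  {p | p.1.1.sin = 0}

theorem EuclideanSpace.mem_sphere_zero_one_iff_sum_sq {ι : Type*} [Fintype ι]
    {x : EuclideanSpace ℝ ι} : x ∈ Metric.sphere 0 1 ↔ ∑ i, x i ^ 2 = 1 := by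
  rw [mem_sphere_zero_iff_norm, ← pow_eq_one_iff_of_nonneg (norm_nonneg x) two_ne_zero,
    EuclideanSpace.norm_sq_eq]
  simp only [Real.norm_eq_abs, sq_abs]

def equator : Set S2 := {x | (x : EuclideanSpace ℝ (Fin 3)) 2 = 0}

def circleHomeomorphEquator : Circle ≃ₜ equator where
  toFun z := ⟨⟨!₂[(z : ℂ).re, (z : ℂ).im, 0], by
    rw [EuclideanSpace.mem_sphere_zero_one_iff_sum_sq, Fin.sum_univ_three]
    simpa [Complex.normSq_apply, ← sq] using Circle.normSq_coe z⟩, rfl⟩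
  invFun x := ⟨x.1.1 0 + x.1.1 1 * Complex.I, by
    have h := EuclideanSpace.mem_sphere_zero_one_iff_sum_sq.mp x.1.2
    rw [Fin.sum_univ_three, x.2] at h
    rw [Submonoid.unitSphere, Submonoid.mem_mk, Subsemigroup.mem_mk, mem_sphere_zero_iff_norm,
      ← pow_eq_one_iff_of_nonneg (norm_nonneg _) two_ne_zero, Complex.sq_norm,
      Complex.normSq_add_mul_I]
    linarith⟩
  left_inv z := Circle.ext (Complex.re_add_im _)
  right_inv x := by
    ext i
    fin_cases i
    · simp
    · simp
    · exact x.2.symm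
  continuous_toFun := by fun_prop
  continuous_invFun := by fun_prop

def angleHomeomorphEquator : Real.Angle ≃ₜ equator :=
  AddCircle.homeomorphCircle'.trans circleHomeomorphEquator

def boolHomeomorphSinEqZero : Bool ≃ₜ {θ : Real.Angle | θ.sin = 0} :=
  Continuous.homeoOfEquivCompactToT2
    (f := Equiv.ofBijective (fun b => ⟨if b then π else 0, by cases b <;> simp⟩) (by
      refine ⟨fun a b hab => ?_, fun ⟨θ, hθ⟩ => ?_⟩
      · cases a <;> cases b <;> simp_all [Subtype.ext_iff, Real.Angle.pi_ne_zero,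
          Real.Angle.pi_ne_zero.symm]
      · rcases Real.Angle.sin_eq_zero_iff.mp hθ with rfl | rfl
        exacts [⟨false, rfl⟩, ⟨true, rfl⟩]))
    continuous_of_discreteTopology

theorem VSet_eq_ASet_union_BSet : VSet = ASet ∪ BSet := by
  ext p
  simp [VSet, ASet, BSet, or_comm]

theorem ASet_eq_univ_prod_equator : ASet = Set.univ ×ˢ equator := by
  ext p
  simp [ASet, equator]

theorem BSet_eq_prod : BSet = ({θ : Real.Angle | θ.sin = 0} ×ˢ Set.univ) ×ˢ Set.univ := by
  ext p
  simp [BSet]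

theorem ASet_inter_BSet_eq_prod :
    ASet ∩ BSet = ({θ : Real.Angle | θ.sin = 0} ×ˢ Set.univ) ×ˢ equator := by
  ext p
  simp [ASet, BSet, equator, and_comm]

/-- The locus `sin γ cos α = 0` in `T² × S²` is the union of a 3-torus and
`S⁰ × S¹ × S²`, glued along two disjoint 2-tori (`S⁰ × T²`). -/
theorem stmt11 :
    VSet = ASet ∪ BSet ∧
    Nonempty (ASet ≃ₜ (Real.Angle × Real.Angle × Real.Angle)) ∧
    Nonempty (BSet ≃ₜ (Bool × Real.Angle × S2)) ∧
    Nonempty ((ASet ∩ BSet : Set ((Real.Angle × Real.Angle) × S2)) ≃ₜ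
      (Bool × Real.Angle × Real.Angle)) := by
  have sinZerosProdAngle : ↥({θ : Real.Angle | θ.sin = 0} ×ˢ Set.univ) ≃ₜ Bool × Real.Angle :=
    (Homeomorph.Set.prod _ _).trans
      (boolHomeomorphSinEqZero.symm.prodCongr (Homeomorph.Set.univ _))
  refine ⟨VSet_eq_ASet_union_BSet, ⟨?_⟩, ⟨?_⟩, ⟨?_⟩⟩
  · exact (Homeomorph.setCongr ASet_eq_univ_prod_equator).trans <|
      (Homeomorph.Set.prod _ _).trans <|
      ((Homeomorph.Set.univ _).prodCongr angleHomeomorphEquator.symm).trans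
        (Homeomorph.prodAssoc _ _ _)
  · exact (Homeomorph.setCongr BSet_eq_prod).trans <|
      (Homeomorph.Set.prod _ _).trans <|
      (sinZerosProdAngle.prodCongr (Homeomorph.Set.univ _)).trans
        (Homeomorph.prodAssoc _ _ _)
  · exact (Homeomorph.setCongr ASet_inter_BSet_eq_prod).trans <|
      (Homeomorph.Set.prod _ _).trans <|
      (sinZerosProdAngle.prodCongr angleHomeomorphEquator.symm).trans
        (Homeomorph.prodAssoc _ _ _)
end
end
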